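/- The assignment μ(Q) = Σ_{U ∈ 𝒰} ℒ(h(U ∩ Q)), where 𝒰 is the a.e. canonical covering of the display poset D_S and ℒ is Lebesgue measure on ℝ, defines a countably additive measure on the Borel σ-algebra of (D_S, d). -/
import Mathlib


/-- A persistent set: a functor from the poset `(ℝ, ≤)` to `Sets`. -/
structure PersistentSet where
  obj : ℝ → Type
  map : ∀ {s t : ℝ}, s ≤ t → obj s → obj t
  map_id : ∀ (t : ℝ) (x : obj t), map le_rfl x = x
  map_comp : ∀ {s t u : ℝ} (h₁ : s ≤ t) (h₂ : t ≤ u) (x : obj s),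
    map h₂ (map h₁ x) = map (h₁.trans h₂) x

def IsMergeTreeCriticalSet (S : PersistentSet) (C : Finset ℝ) : Prop :=
  (∀ t : ℝ, (∀ c ∈ C, t < c) → IsEmpty (S.obj t)) ∧
  (∀ t : ℝ, (∀ c ∈ C, c < t) → ∃ x : S.obj t, ∀ y : S.obj t, y = x) ∧
  (∀ (s t : ℝ) (h : s ≤ t), (∀ c ∈ C, c < s ∨ t < c) → Function.Bijective (S.map h))

/-- A (finite) abstract merge tree. -/
def IsAbstractMergeTree (S : PersistentSet) : Prop :=
  (∀ t : ℝ, Finite (S.obj t)) ∧ ∃ C : Finset ℝ, IsMergeTreeCriticalSet S C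

/-- The display poset `D_S = ⋃_t S(t) × {t}`. -/
def Display (S : PersistentSet) : Type := Σ _t : ℝ, S.obj _t

/-- The partial order of the display poset: `(a,t) ≤ (b,t')` iff `t ≤ t'` and
`S(t ≤ t')(a) = b`.  The height of `p : Display S` is `p.1`. -/
def DispLe (S : PersistentSet) (p q : Display S) : Prop :=
  ∃ h : p.1 ≤ q.1, S.map h p.2 = q.2

/-- The pseudo-distance `d((a,t),(b,t')) = (t̃ - t) + (t̃ - t')`, where `t̃` is the
infimum of the heights of common ancestors of the two points. -/
noncomputable def dDisp (S : PersistentSet) (p q : Display S) : ℝ :=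
  2 * sInf {t : ℝ | ∃ r : Display S, DispLe S p r ∧ DispLe S q r ∧ r.1 = t} - p.1 - q.1

open MeasureTheory
open scoped ENNReal

/-- `S` is regular. -/
def RegularPS (S : PersistentSet) : Prop :=
  ∀ t : ℝ, ∃ ε > (0 : ℝ), ∀ (t' : ℝ) (h : t ≤ t'), t' < t + ε → Function.Bijective (S.map h)

/-- The topology on the display poset generated by the open balls of `dDisp`. -/
noncomputable def dispTopology (S : PersistentSet) : TopologicalSpace (Display S) :=
  TopologicalSpace.generateFrom
    {B | ∃ (p : Display S) (ε : ℝ), B = {q : Display S | dDisp S p q < ε}}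

/-- The Borel σ-algebra of the display poset. -/
noncomputable def dispBorel (S : PersistentSet) : MeasurableSpace (Display S) :=
  @borel _ (dispTopology S)

/-- `μ(Q) = Σ_{U ∈ 𝒰} ℒ(h(U ∩ Q))`, the candidate measure built from the a.e. canonical
covering `𝒰 = (Us i)` of the display poset. -/
noncomputable def coverMeasure (S : PersistentSet) {I : Type} (Us : I → Set (Display S))
    (Q : Set (Display S)) : ℝ≥0∞ :=
  ∑' i : I, volume ((fun q : Display S => q.1) '' (Us i ∩ Q))

/-! ### Auxiliary lemmas -/

/-- The set of heights of common ancestors of `p` and `q`. -/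
def ancSet (S : PersistentSet) (p q : Display S) : Set ℝ :=
  {t : ℝ | ∃ r : Display S, DispLe S p r ∧ DispLe S q r ∧ r.1 = t}

lemma dDisp_eq (S : PersistentSet) (p q : Display S) :
    dDisp S p q = 2 * sInf (ancSet S p q) - p.1 - q.1 := rfl

lemma DispLe.trans' {S : PersistentSet} {p q r : Display S}
    (h1 : DispLe S p q) (h2 : DispLe S q r) : DispLe S p r := by
  obtain ⟨l1, e1⟩ := h1
  obtain ⟨l2, e2⟩ := h2
  exact ⟨l1.trans l2, by rw [← e2, ← e1, S.map_comp]⟩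

lemma ancSet_nonempty {S : PersistentSet} (hS : IsAbstractMergeTree S)
    (p q : Display S) : (ancSet S p q).Nonempty := by
  obtain ⟨-, C, -, hC2, -⟩ := hS
  classical
  set T : Finset ℝ := insert p.1 (insert q.1 C) with hT
  have hTne : T.Nonempty := ⟨p.1, by simp [hT]⟩
  set t0 : ℝ := T.max' hTne + 1 with ht0
  have hlt : ∀ x ∈ T, x < t0 := fun x hx => by
    have := T.le_max' x hx; linarith
  obtain ⟨x, hx⟩ := hC2 t0 (fun c hc => hlt c (by simp [hT, hc]))
  have hp : p.1 ≤ t0 := (hlt p.1 (by simp [hT])).le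
  have hq : q.1 ≤ t0 := (hlt q.1 (by simp [hT])).le
  exact ⟨t0, ⟨t0, S.map hp p.2⟩, ⟨hp, rfl⟩,
    ⟨hq, by rw [hx (S.map hq q.2), hx (S.map hp p.2)]⟩, rfl⟩

lemma ancSet_bddBelow {S : PersistentSet} (p q : Display S) :
    BddBelow (ancSet S p q) := by
  refine ⟨p.1, fun t ht => ?_⟩
  obtain ⟨r, ⟨hl, -⟩, -, rfl⟩ := ht
  exact hl

lemma mem_ancSet_lb {S : PersistentSet} {p q : Display S} {t : ℝ}
    (ht : t ∈ ancSet S p q) : p.1 ≤ t ∧ q.1 ≤ t := by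
  obtain ⟨r, ⟨hl, -⟩, ⟨hl', -⟩, rfl⟩ := ht
  exact ⟨hl, hl'⟩

lemma dDisp_triangle {S : PersistentSet} (hS : IsAbstractMergeTree S)
    (p q r : Display S) : dDisp S p q ≤ dDisp S p r + dDisp S r q := by
  rw [dDisp_eq, dDisp_eq, dDisp_eq]
  have key : sInf (ancSet S p q) ≤ sInf (ancSet S p r) + sInf (ancSet S r q) - r.1 := by
    refine le_of_forall_pos_le_add (fun ε hε => ?_)
    obtain ⟨u, hu, hult⟩ := Real.lt_sInf_add_pos (ancSet_nonempty hS p r) (half_pos hε)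
    obtain ⟨t, ht, htlt⟩ := Real.lt_sInf_add_pos (ancSet_nonempty hS r q) (half_pos hε)
    obtain ⟨s, hps, hrs, rfl⟩ := hu
    obtain ⟨w, hrw, hqw, rfl⟩ := ht
    have hru : r.1 ≤ s.1 := hrs.1
    have hrt : r.1 ≤ w.1 := hrw.1
    set v : ℝ := max s.1 w.1 with hv
    have hrv : r.1 ≤ v := hru.trans (le_max_left _ _)
    have hsv : s.1 ≤ v := le_max_left _ _
    have hwv : w.1 ≤ v := le_max_right _ _
    have hz : (max s.1 w.1) ∈ ancSet S p q := by
      refine ⟨⟨v, S.map hrv r.2⟩, ?_, ?_, rfl⟩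
      · refine hps.trans' ⟨hsv, ?_⟩
        obtain ⟨hl, e⟩ := hrs
        rw [← e, S.map_comp]
      · refine hqw.trans' ⟨hwv, ?_⟩
        obtain ⟨hl, e⟩ := hrw
        rw [← e, S.map_comp]
    have h1 : sInf (ancSet S p q) ≤ max s.1 w.1 :=
      csInf_le (ancSet_bddBelow p q) hz
    have h2 : max s.1 w.1 ≤ s.1 + w.1 - r.1 := by
      rcases max_cases s.1 w.1 with ⟨he, -⟩ | ⟨he, -⟩ <;> rw [he] <;> linarith
    linarith
  have hpr := (mem_ancSet_lb (Real.lt_sInf_add_pos (ancSet_nonempty hS p r) one_pos).choose_spec.1)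
  linarith

/-- The image under the height function of the intersection of `U` with a Borel set
is measurable. -/
lemma image_measurable {S : PersistentSet} (hS : IsAbstractMergeTree S)
    {U : Set (Display S)} {a b : ℝ}
    (hbij : Set.BijOn (fun q : Display S => q.1) U (Set.Ioo a b))
    (hiso : ∀ q ∈ U, ∀ r ∈ U, dDisp S q r = |q.1 - r.1|)
    {Q : Set (Display S)} (hQ : MeasurableSet[dispBorel S] Q) :
    MeasurableSet ((fun q : Display S => q.1) '' (U ∩ Q)) := by
  set f : Display S → ℝ := fun q => q.1 with hf
  -- Step 1: images of open sets are open.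
  have hopen : ∀ V : Set (Display S), @IsOpen _ (dispTopology S) V → IsOpen (f '' (U ∩ V)) := by
    intro V hV
    have hV' : TopologicalSpace.GenerateOpen
        {B | ∃ (p : Display S) (ε : ℝ), B = {q : Display S | dDisp S p q < ε}} V := hV
    induction hV' with
    | basic B hB =>
      obtain ⟨p, ε, rfl⟩ := hB
      rw [Metric.isOpen_iff]
      rintro x ⟨q0, ⟨hq0U, hq0B⟩, rfl⟩
      have hx : f q0 ∈ Set.Ioo a b := hbij.mapsTo hq0U
      refine ⟨min (ε - dDisp S p q0) (min (f q0 - a) (b - f q0)), by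
        simp only [Set.mem_setOf_eq] at hq0B
        simp only [lt_min_iff]
        exact ⟨by linarith, by exact sub_pos.2 hx.1, by exact sub_pos.2 hx.2⟩, ?_⟩
      intro t ht
      simp only [Metric.mem_ball, Real.dist_eq, lt_min_iff] at ht
      obtain ⟨h1, h2, h3⟩ := ht
      have htIoo : t ∈ Set.Ioo a b := by
        constructor
        · rcases abs_lt.1 h2 with ⟨hl, hr⟩; linarith
        · rcases abs_lt.1 h3 with ⟨hl, hr⟩; linarith
      obtain ⟨q, hqU, hqt⟩ := hbij.surjOn htIoo
      refine ⟨q, ⟨hqU, ?_⟩, hqt⟩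
      simp only [Set.mem_setOf_eq] at hq0B ⊢
      have htr : dDisp S p q ≤ dDisp S p q0 + dDisp S q0 q := dDisp_triangle hS p q q0
      have : dDisp S q0 q = |f q0 - f q| := hiso q0 hq0U q hqU
      have habs : |f q0 - f q| = |t - f q0| := by
        rw [← hqt, abs_sub_comm]
      calc dDisp S p q ≤ dDisp S p q0 + dDisp S q0 q := htr
        _ = dDisp S p q0 + |t - f q0| := by rw [this, habs]
        _ < dDisp S p q0 + (ε - dDisp S p q0) := by linarith
        _ = ε := by ring
    | univ =>
      rw [Set.inter_univ, hbij.image_eq]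
      exact isOpen_Ioo
    | inter V₁ V₂ h₁ h₂ ih₁ ih₂ =>
      have : f '' (U ∩ (V₁ ∩ V₂)) = f '' (U ∩ V₁) ∩ f '' (U ∩ V₂) := by
        rw [← hbij.injOn.image_inter Set.inter_subset_left Set.inter_subset_left,
          Set.inter_inter_distrib_left]
      rw [this]
      exact (ih₁ h₁).inter (ih₂ h₂)
    | sUnion K hK ih =>
      have : f '' (U ∩ ⋃₀ K) = ⋃ V ∈ K, f '' (U ∩ V) := by
        rw [Set.sUnion_eq_biUnion, Set.inter_iUnion₂, Set.image_iUnion₂]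
      rw [this]
      exact isOpen_biUnion (fun V hV => ih V hV (hK V hV))
  -- Step 2: Borel induction.
  revert hQ
  have := MeasurableSpace.generateFrom_induction
    (C := {s : Set (Display S) | @IsOpen _ (dispTopology S) s})
    (p := fun s _ => MeasurableSet (f '' (U ∩ s)))
    ?_ ?_ ?_ ?_ (s := Q)
  · intro hQ
    exact this hQ
  · intro t ht _
    exact (hopen t ht).measurableSet
  · show MeasurableSet (f '' (U ∩ (∅ : Set (Display S))))
    rw [Set.inter_empty, Set.image_empty]; exact MeasurableSet.empty
  · intro t ht hmt
    show MeasurableSet (f '' (U ∩ tᶜ))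
    have : f '' (U ∩ tᶜ) = Set.Ioo a b \ f '' (U ∩ t) := by
      ext x
      constructor
      · rintro ⟨q, ⟨hqU, hqt⟩, rfl⟩
        refine ⟨hbij.mapsTo hqU, ?_⟩
        rintro ⟨q', ⟨hq'U, hq't⟩, he⟩
        exact hqt (by rwa [hbij.injOn hq'U hqU he] at hq't)
      · rintro ⟨hx, hnx⟩
        obtain ⟨q, hqU, rfl⟩ := hbij.surjOn hx
        exact ⟨q, ⟨hqU, fun hqt => hnx ⟨q, ⟨hqU, hqt⟩, rfl⟩⟩, rfl⟩
    rw [this]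
    exact measurableSet_Ioo.diff hmt
  · intro g hg hpg
    show MeasurableSet (f '' (U ∩ ⋃ n, g n))
    have : f '' (U ∩ ⋃ n, g n) = ⋃ n, f '' (U ∩ g n) := by
      rw [Set.inter_iUnion, Set.image_iUnion]
    rw [this]
    exact MeasurableSet.iUnion hpg

/-- `Q ↦ Σ_U ℒ(h(U ∩ Q))` defines a countably additive measure on the
Borel σ-algebra of `(D_S, dDisp)`: it vanishes on `∅` and is σ-additive on countable
families of pairwise disjoint Borel sets. -/
theorem coverMeasure_is_measure (S : PersistentSet)
    (hS : IsAbstractMergeTree S) (hreg : RegularPS S)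
    {I : Type} [Finite I] (Us : I → Set (Display S))
    (hopen : ∀ i, @IsOpen _ (dispTopology S) (Us i))
    (hdisj : Pairwise (Function.onFun Disjoint Us))
    (hhomeo : ∀ i, ∃ a b : ℝ,
      Set.BijOn (fun q : Display S => q.1) (Us i) (Set.Ioo a b) ∧
      ∀ q ∈ Us i, ∀ r ∈ Us i, dDisp S q r = |q.1 - r.1|) :
    coverMeasure S Us ∅ = 0 ∧
    ∀ Q : ℕ → Set (Display S), (∀ n, MeasurableSet[dispBorel S] (Q n)) →
      Pairwise (Function.onFun Disjoint Q) →
      coverMeasure S Us (⋃ n, Q n) = ∑' n : ℕ, coverMeasure S Us (Q n) := by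
  constructor
  · simp [coverMeasure]
  · intro Q hQmeas hQdisj
    have key : ∀ i : I, volume ((fun q : Display S => q.1) '' (Us i ∩ ⋃ n, Q n)) =
        ∑' n : ℕ, volume ((fun q : Display S => q.1) '' (Us i ∩ Q n)) := by
      intro i
      obtain ⟨a, b, hbij, hiso⟩ := hhomeo i
      have h1 : (fun q : Display S => q.1) '' (Us i ∩ ⋃ n, Q n) =
          ⋃ n, (fun q : Display S => q.1) '' (Us i ∩ Q n) := by
        rw [Set.inter_iUnion, Set.image_iUnion]
      rw [h1]
      refine measure_iUnion ?_ (fun n => image_measurable hS hbij hiso (hQmeas n))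
      intro m n hmn
      refine Set.disjoint_left.2 ?_
      rintro x ⟨q, ⟨hqU, hqm⟩, rfl⟩ ⟨q', ⟨hq'U, hq'n⟩, he⟩
      have : q' = q := hbij.injOn hq'U hqU he
      subst this
      exact Set.disjoint_left.1 (hQdisj hmn) hqm hq'n
    calc coverMeasure S Us (⋃ n, Q n)
        = ∑' i : I, ∑' n : ℕ, volume ((fun q : Display S => q.1) '' (Us i ∩ Q n)) := by
          unfold coverMeasure; exact tsum_congr key
      _ = ∑' n : ℕ, ∑' i : I, volume ((fun q : Display S => q.1) '' (Us i ∩ Q n)) :=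
          ENNReal.tsum_comm
      _ = ∑' n : ℕ, coverMeasure S Us (Q n) := rfl
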